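/- arXiv:1306.6044 — 2 statements merged into one kernel-verified Lean document; each statement's English description precedes it below -/
import Mathlib

section
/- Let g and h be integers with g ≥ h ≥ 2, let n be a positive integer and let 0 < p < 1. Let S be a random subset of {1,…,n} in which each element of {1,…,n} is included independently with probability p. Then the expected number of (h,g)-bad elements of S satisfies E[|S_bad|] ≤ n^{g+h-1} p^{gh}. -/
open MeasureTheory

/-- `m` is `(h,g)`-bad for `S`: there are integers `m_1 < ⋯ < m_{g-1} < m` (described here by
a strictly monotone `M : Fin g → ℤ` with largest value `m`) and `0 < ℓ_1 < ⋯ < ℓ_{h-1}`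
(described by a strictly monotone `L : Fin h → ℤ` with smallest value `0`) such that the `gh`
sums `M i + L j` are pairwise distinct elements of `S`. -/
def IsBad (h g : ℕ) (S : Finset ℤ) (m : ℤ) : Prop :=
  ∃ (M : Fin g → ℤ) (L : Fin h → ℤ),
    StrictMono M ∧ StrictMono L ∧
    (∀ i, M i ≤ m) ∧ (∃ i, M i = m) ∧
    (∀ j, 0 ≤ L j) ∧ (∃ j, L j = 0) ∧
    Function.Injective (fun p : Fin g × Fin h => M p.1 + L p.2) ∧
    ∀ (i : Fin g) (j : Fin h), M i + L j ∈ S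

open Classical in
/-- The set of `(h,g)`-bad elements of `S`. -/
noncomputable def badSet (h g : ℕ) (S : Finset ℤ) : Finset ℤ :=
  S.filter (fun m => IsBad h g S m)

open Classical in
/-- The random subset of `{1, …, n}` determined by a sample `ω : Fin n → Bool` of `n`
independent Bernoulli variables: `i + 1` is included iff `ω i = true`. -/
noncomputable def randomSubset (n : ℕ) (ω : Fin n → Bool) : Finset ℤ :=
  (Finset.univ.filter (fun i : Fin n => ω i = true)).image (fun i : Fin n => ((i : ℕ) : ℤ) + 1)

/-! A first-moment bound. Every bad `m` is the largest entry of a witness `(M, L)` whose `gh`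
sums lie in `S ⊆ {1, …, n}`; normalising `L 0 = 0` forces all `M i` and all other `L j` into
`{1, …, n}`, so there are at most `n ^ (g + h - 1)` witnesses, and `m ↦ (M, L)` is injective.
A witness with `gh` distinct sums lies in `S` with probability `p ^ (g * h)`. -/

open Finset Fintype Function

lemma pi_bernoulli_forall_true {ι : Type*} [Fintype ι] (q : NNReal) (hq : q ≤ 1) (I : Finset ι) :
    Measure.pi (fun _ : ι => (PMF.bernoulli q hq).toMeasure) {ω | ∀ i ∈ I, ω i = true} =
      (q : ENNReal) ^ #I := by
  classical
  have hset : {ω : ι → Bool | ∀ i ∈ I, ω i = true} =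
      Set.univ.pi fun i => if i ∈ (I : Set ι) then {true} else Set.univ := by
    rw [Set.univ_pi_ite]; ext; simp [Set.mem_pi]
  rw [hset, Measure.pi_pi]
  have hν : (PMF.bernoulli q hq).toMeasure {true} = q := by
    rw [PMF.toMeasure_apply_singleton _ _ (measurableSet_singleton _)]; rfl
  simp only [mem_coe, apply_ite, hν, measure_univ]
  rw [Fintype.prod_ite_mem, prod_const]

lemma randomSubset_subset_Icc (n : ℕ) (ω : Fin n → Bool) :
    randomSubset n ω ⊆ Icc 1 (n : ℤ) := by
  intro a ha
  simp only [randomSubset, mem_image, mem_filter, mem_univ, true_and] at ha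
  obtain ⟨i, -, rfl⟩ := ha
  simp only [mem_Icc]
  omega

lemma measureReal_subset_randomSubset_le (n : ℕ) (q : NNReal) (hq : q ≤ 1) (A : Finset ℤ) :
    (Measure.pi fun _ : Fin n => (PMF.bernoulli q hq).toMeasure).real
      {ω | A ⊆ randomSubset n ω} ≤ (q : ℝ) ^ #A := by
  set f : Fin n → ℤ := fun i => ((i : ℕ) : ℤ) + 1
  have hf : Injective f := fun i j hij => by ext; simp only [f] at hij; omega
  by_cases hA : A ⊆ Icc 1 (n : ℤ)
  · have hrange : ∀ a ∈ A, a ∈ Set.range f := fun a ha => by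
      have := mem_Icc.mp (hA ha)
      exact ⟨⟨(a - 1).toNat, by omega⟩, by simp only [f]; omega⟩
    have hcard : #(A.preimage f hf.injOn) = #A := by
      rw [card_preimage, filter_true_of_mem hrange]
    have hset : {ω | A ⊆ randomSubset n ω} = {ω | ∀ i ∈ A.preimage f hf.injOn, ω i = true} := by
      ext ω
      simp only [Set.mem_setOf_eq, mem_preimage, randomSubset]
      constructor
      · intro hω i hi
        obtain ⟨j, hj, hji⟩ := mem_image.mp (hω hi)
        rw [← hf hji]
        exact (mem_filter.mp hj).2
      · intro hω a ha
        obtain ⟨i, rfl⟩ := hrange a ha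
        exact mem_image_of_mem f (mem_filter.mpr ⟨mem_univ i, hω i ha⟩)
    rw [measureReal_def, hset, pi_bernoulli_forall_true, hcard, ENNReal.toReal_pow,
      ENNReal.coe_toReal]
  · have : {ω | A ⊆ randomSubset n ω} = ∅ :=
      Set.eq_empty_of_forall_notMem fun ω h => hA (h.trans (randomSubset_subset_Icc n ω))
    rw [this, measureReal_empty]
    positivity

lemma integral_le_sum_measureReal_of_le_card {Ω α : Type*} [MeasurableSpace Ω] [Finite Ω]
    [MeasurableSingletonClass Ω] {μ : Measure Ω} [IsFiniteMeasure μ] (f : Ω → ℝ)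
    (C : Finset α) (E : α → Set Ω) [∀ c ω, Decidable (ω ∈ E c)]
    (hf : ∀ ω, f ω ≤ #{c ∈ C | ω ∈ E c}) :
    ∫ ω, f ω ∂μ ≤ ∑ c ∈ C, μ.real (E c) := by
  have hind : ∀ ω, (#{c ∈ C | ω ∈ E c} : ℝ) = ∑ c ∈ C, (E c).indicator 1 ω := fun ω => by
    simp only [natCast_card_filter, Set.indicator_apply, Pi.one_apply]
  calc ∫ ω, f ω ∂μ ≤ ∫ ω, ∑ c ∈ C, (E c).indicator 1 ω ∂μ :=
        integral_mono .of_finite .of_finite fun ω => (hf ω).trans (hind ω).le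
    _ = ∑ c ∈ C, μ.real (E c) := by
        rw [integral_finset_sum _ fun c _ => .of_finite]
        exact sum_congr rfl fun c _ => integral_indicator_one (Set.toFinite _).measurableSet

def pairSum {g h : ℕ} (c : (Fin g → ℤ) × (Fin h → ℤ)) (q : Fin g × Fin h) : ℤ :=
  c.1 q.1 + c.2 q.2

open Classical in
noncomputable def witnesses (g k n : ℕ) : Finset ((Fin g → ℤ) × (Fin (k + 1) → ℤ)) :=
  {c ∈ piFinset (fun _ => Icc 1 (n : ℤ)) ×ˢ
      (piFinset fun _ : Fin k => Icc 1 (n : ℤ)).image (Fin.cons (α := fun _ => ℤ) 0) |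
        Injective (pairSum c)}

lemma card_witnesses_le (g k n : ℕ) : #(witnesses g k n) ≤ n ^ (g + k) := by
  calc #(witnesses g k n)
      ≤ #(piFinset fun _ : Fin g => Icc 1 (n : ℤ)) *
          #(piFinset fun _ : Fin k => Icc 1 (n : ℤ)) := by
        rw [witnesses]
        refine (card_filter_le _ _).trans ?_
        rw [card_product]
        exact Nat.mul_le_mul_left _ card_image_le
    _ = n ^ (g + k) := by simp [card_piFinset, pow_add]

lemma exists_mem_witnesses_of_isBad {g k n : ℕ} {S : Finset ℤ} (hS : S ⊆ Icc 1 (n : ℤ)) {m : ℤ}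
    (hm : IsBad (k + 1) g S m) :
    ∃ c ∈ witnesses g k n, univ.image (pairSum c) ⊆ S ∧ IsGreatest (Set.range c.1) m := by
  obtain ⟨M, L, -, hL, hMle, ⟨i₀, hi₀⟩, hL_nonneg, ⟨j₀, hj₀⟩, hinj, hmem⟩ := hm
  have hL_zero : L 0 = 0 := le_antisymm (hj₀ ▸ hL.monotone (Fin.zero_le j₀)) (hL_nonneg 0)
  have hM_Icc : ∀ i, M i ∈ Icc 1 (n : ℤ) := fun i => hS (by simpa [hj₀] using hmem i j₀)
  have hL_tail : Fin.tail L ∈ piFinset fun _ : Fin k => Icc 1 (n : ℤ) := by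
    refine mem_piFinset.mpr fun j => mem_Icc.mpr ⟨?_, ?_⟩
    · have := hL (Fin.succ_pos j)
      simp only [Fin.tail]
      omega
    · have h₁ := mem_Icc.mp (hM_Icc i₀)
      have h₂ := mem_Icc.mp (hS (hmem i₀ j.succ))
      simp only [Fin.tail]
      omega
  refine ⟨(M, L), ?_, image_subset_iff.mpr fun q _ => hmem q.1 q.2, ⟨i₀, hi₀⟩, ?_⟩
  · rw [witnesses, mem_filter, mem_product]
    refine ⟨⟨mem_piFinset.mpr hM_Icc, ?_⟩, hinj⟩
    exact mem_image.mpr ⟨Fin.tail L, hL_tail, by rw [← hL_zero, Fin.cons_self_tail]⟩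
  · rintro _ ⟨i, rfl⟩
    exact hMle i

lemma card_badSet_le {g k n : ℕ} {S : Finset ℤ} (hS : S ⊆ Icc 1 (n : ℤ)) :
    #(badSet (k + 1) g S) ≤ #{c ∈ witnesses g k n | univ.image (pairSum c) ⊆ S} := by
  classical
  have hwit : ∀ m ∈ badSet (k + 1) g S, ∃ c ∈ witnesses g k n,
      univ.image (pairSum c) ⊆ S ∧ IsGreatest (Set.range c.1) m :=
    fun m hm => exists_mem_witnesses_of_isBad hS (mem_filter.mp hm).2
  choose! w hw using hwit
  refine card_le_card_of_injOn w (fun m hm => mem_filter.mpr ⟨(hw m hm).1, (hw m hm).2.1⟩) ?_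
  intro m₁ hm₁ m₂ hm₂ hw₁₂
  exact (hw m₁ hm₁).2.2.unique (hw₁₂ ▸ (hw m₂ hm₂).2.2)

lemma card_image_pairSum_of_mem_witnesses {g k n : ℕ} {c : (Fin g → ℤ) × (Fin (k + 1) → ℤ)}
    (hc : c ∈ witnesses g k n) : #(univ.image (pairSum c)) = g * (k + 1) := by
  rw [witnesses, mem_filter] at hc
  rw [card_image_of_injective _ hc.2, card_univ, card_prod, Fintype.card_fin, Fintype.card_fin]

/-- If `S` is a random subset of `{1, …, n}` where each element is included independently
with probability `p`, then `E[|S_bad|] ≤ n^{g+h-1} p^{gh}`. -/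
theorem stmt11 (g h : ℕ) (hh : 2 ≤ h) (n : ℕ)
    (p : ℝ) (hp0 : 0 < p) (hp1 : p < 1)
    (μ : Measure (Fin n → Bool))
    (hμ : μ = Measure.pi (fun _ : Fin n =>
      (PMF.bernoulli (Real.toNNReal p) (by
        simpa using Real.toNNReal_le_one.mpr hp1.le)).toMeasure)) :
    ∫ ω, ((badSet h g (randomSubset n ω)).card : ℝ) ∂μ ≤
      (n : ℝ) ^ (g + h - 1) * p ^ (g * h) := by
  obtain ⟨k, rfl⟩ : ∃ k, h = k + 1 := ⟨h - 1, by omega⟩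
  have : IsProbabilityMeasure μ := hμ ▸ inferInstance
  calc ∫ ω, ((badSet (k + 1) g (randomSubset n ω)).card : ℝ) ∂μ
      ≤ ∑ c ∈ witnesses g k n, μ.real {ω | univ.image (pairSum c) ⊆ randomSubset n ω} :=
        integral_le_sum_measureReal_of_le_card _ _ _ fun ω =>
          mod_cast card_badSet_le (randomSubset_subset_Icc n ω)
    _ ≤ ∑ _c ∈ witnesses g k n, p ^ (g * (k + 1)) := sum_le_sum fun c hc => by
        have := hμ ▸ measureReal_subset_randomSubset_le n _ _ (univ.image (pairSum c))
        rwa [card_image_pairSum_of_mem_witnesses hc, Real.coe_toNNReal _ hp0.le] at this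
    _ = #(witnesses g k n) * p ^ (g * (k + 1)) := by rw [sum_const, nsmul_eq_mul]
    _ ≤ (n : ℝ) ^ (g + (k + 1) - 1) * p ^ (g * (k + 1)) := by
        rw [show g + (k + 1) - 1 = g + k by omega]
        gcongr
        exact_mod_cast card_witnesses_le g k n
end

section
/- Let g and h be integers with g ≥ h ≥ 2. There exists a constant C = C(g,h) > 0 such that for every integer N ≥ 2 and every C_h[g] set A ⊆ [0, N²], writing A_ν = |A ∩ [(ν-1)N, νN]| for ν = 1,…,N, one has Σ_{ν=1}^{N} A_ν · ν^{-(1 - 1/h)} ≤ C · (N log N)^{1 - 1/h}. -/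
/-!
Cut `[0, N²]` into the `N` blocks `[(ν-1)N, νN]`. Two blocks share at most one point, so an
`h`-subset of `A` lies in at most one block. Translating such a subset to have minimum `0` gives a
shape inside `[0, N]` containing `0`, of which there are at most `N^(h-1)`; and since `A` is a
`C_h[g]` set, each shape occurs for fewer than `g` subsets. Hence `∑ binom(A_ν, h) ≪ N^(h-1)`,
so, as `m^h ≪_h binom(m, h) + 1`, also `∑ A_ν^h ≪ N^(h-1)`. Hölder's inequality with the
conjugate exponent `h/(h-1)` turns the weights `ν^(-(1-1/h))` into the harmonic sum
`∑ 1/ν ≪ log N`.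
-/

/-- `A` is a `C_h[g]` set: there do not exist a set `X` of `h` integers and `g` pairwise
distinct integers `k_1, …, k_g` such that `X + k_i ⊆ A` for every `i`. -/
def IsChgSet (h g : ℕ) (A : Set ℤ) : Prop :=
  ¬ ∃ (X : Finset ℤ) (k : Fin g → ℤ), X.card = h ∧ Function.Injective k ∧
      ∀ i : Fin g, ∀ x ∈ X, x + k i ∈ A

open Finset Real

lemma IsChgSet.card_lt_of_forall_add_mem {h g : ℕ} {A : Set ℤ} (hA : IsChgSet h g A)
    {X K : Finset ℤ} (hX : X.card = h) (hK : ∀ k ∈ K, ∀ x ∈ X, x + k ∈ A) : K.card < g := by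
  by_contra! hg
  obtain ⟨K', hK'K, hK'⟩ := exists_subset_card_eq hg
  let e := K'.orderIsoOfFin hK'
  exact hA ⟨X, fun i => e i, hX, Subtype.val_injective.comp e.injective,
    fun i x hx => hK _ (hK'K (e i).2) x hx⟩

/-- The translate of `S` whose minimum is `0` (for `S = ∅`, the empty set). -/
noncomputable def shape (S : Finset ℤ) : Finset ℤ := S.image (· - S.min.untopD 0)

lemma min_untopD_eq_min' {S : Finset ℤ} (hS : S.Nonempty) : S.min.untopD 0 = S.min' hS := by
  rw [← coe_min' hS]
  rfl

lemma card_shape (S : Finset ℤ) : (shape S).card = S.card :=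
  card_image_of_injective _ sub_left_injective

lemma image_add_shape (S : Finset ℤ) : (shape S).image (· + S.min.untopD 0) = S := by
  simp [shape, image_image, Function.comp_def]

lemma zero_mem_shape {S : Finset ℤ} (hS : S.Nonempty) : 0 ∈ shape S :=
  mem_image.2 ⟨S.min' hS, min'_mem S hS, by simp [min_untopD_eq_min' hS]⟩

lemma shape_subset_Icc {S : Finset ℤ} {a : ℤ} {N : ℕ} (hS : S ⊆ Icc a (a + N)) :
    shape S ⊆ Icc 0 N := by
  intro y hy
  obtain ⟨x, hx, rfl⟩ := mem_image.1 hy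
  have hne : S.Nonempty := ⟨x, hx⟩
  have hmin := mem_Icc.1 (hS (min'_mem S hne))
  have hxIcc := mem_Icc.1 (hS hx)
  have hle := min'_le S x hx
  rw [min_untopD_eq_min' hne, mem_Icc]
  omega

lemma card_le_choose_of_forall_zero_mem_subset_Icc {𝒳 : Finset (Finset ℤ)} {h N : ℕ}
    (h𝒳 : ∀ X ∈ 𝒳, X.card = h ∧ 0 ∈ X ∧ X ⊆ Icc 0 N) : 𝒳.card ≤ N.choose (h - 1) := by
  have hmaps : ∀ X ∈ 𝒳, X.erase 0 ∈ powersetCard (h - 1) (Icc (1 : ℤ) N) := by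
    intro X hX
    obtain ⟨hcard, h0, hsub⟩ := h𝒳 X hX
    refine mem_powersetCard.2 ⟨fun x hx => ?_, by rw [card_erase_of_mem h0, hcard]⟩
    obtain ⟨hx0, hxX⟩ := mem_erase.1 hx
    have := mem_Icc.1 (hsub hxX)
    rw [mem_Icc]
    omega
  have hinj : Set.InjOn (·.erase 0) (𝒳 : Set (Finset ℤ)) := fun X hX Y hY hXY => by
    rw [← insert_erase (h𝒳 X hX).2.1, ← insert_erase (h𝒳 Y hY).2.1]
    exact congrArg (insert 0) hXY
  calc 𝒳.card ≤ (powersetCard (h - 1) (Icc (1 : ℤ) N)).card := card_le_card_of_injOn _ hmaps hinj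
    _ = N.choose (h - 1) := by simp

theorem IsChgSet.card_le_of_subset_Icc {h g N : ℕ} {A : Set ℤ} (hA : IsChgSet h g A)
    (hh : 1 ≤ h) {E : Finset (Finset ℤ)}
    (hE : ∀ S ∈ E, S.card = h ∧ ↑S ⊆ A ∧ ∃ a : ℤ, S ⊆ Icc a (a + N)) :
    E.card ≤ (g - 1) * N.choose (h - 1) := by
  have hfiber : ∀ X ∈ E.image shape, (E.filter (shape · = X)).card ≤ g - 1 := by
    intro X hX
    obtain ⟨S₀, hS₀, rfl⟩ := mem_image.1 hX
    set F := E.filter (shape · = shape S₀)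
    -- within a fibre, a set is determined by its minimum
    have hinj : Set.InjOn (·.min.untopD 0) (F : Set (Finset ℤ)) := fun S hS T hT hST => by
      rw [← image_add_shape S, ← image_add_shape T, (mem_filter.1 hS).2, (mem_filter.1 hT).2]
      exact congrArg (fun m : ℤ => (shape S₀).image (· + m)) hST
    have hlt := hA.card_lt_of_forall_add_mem (X := shape S₀) (K := F.image (·.min.untopD 0))
      (by rw [card_shape, (hE S₀ hS₀).1]) (by
        intro _ hk x hx
        obtain ⟨S, hS, rfl⟩ := mem_image.1 hk
        obtain ⟨hSE, hSshape⟩ := mem_filter.1 hS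
        rw [← hSshape] at hx
        have hxS := mem_image_of_mem (· + S.min.untopD 0) hx
        rw [image_add_shape] at hxS
        exact (hE S hSE).2.1 hxS)
    rw [card_image_of_injOn hinj] at hlt
    omega
  have hshapes : (E.image shape).card ≤ N.choose (h - 1) := by
    refine card_le_choose_of_forall_zero_mem_subset_Icc fun X hX => ?_
    obtain ⟨S, hS, rfl⟩ := mem_image.1 hX
    obtain ⟨hcard, -, a, hSa⟩ := hE S hS
    exact ⟨(card_shape S).trans hcard, zero_mem_shape (card_pos.1 (by omega)),
      shape_subset_Icc hSa⟩
  calc E.card ≤ (g - 1) * (E.image shape).card := card_le_mul_card_image E (g - 1) hfiber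
    _ ≤ (g - 1) * N.choose (h - 1) := Nat.mul_le_mul_left _ hshapes

noncomputable def block (N ν : ℕ) : Finset ℤ := Icc (((ν : ℤ) - 1) * N) ((ν : ℤ) * N)

lemma block_eq_Icc (N ν : ℕ) : block N ν = Icc (((ν : ℤ) - 1) * N) (((ν : ℤ) - 1) * N + N) := by
  rw [block]
  ring_nf

lemma eq_of_mem_block_of_mem_block {N ν μ : ℕ} (hνμ : ν < μ) {x : ℤ} (hxν : x ∈ block N ν)
    (hxμ : x ∈ block N μ) : x = ν * N := by
  rw [block, mem_Icc] at hxν hxμ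
  have hcast : (ν : ℤ) + 1 ≤ μ := by exact_mod_cast hνμ
  have : (ν : ℤ) * N ≤ ((μ : ℤ) - 1) * N := by nlinarith
  omega

lemma card_block_inter_block_le_one {N ν μ : ℕ} (hνμ : ν ≠ μ) :
    (block N ν ∩ block N μ).card ≤ 1 := by
  refine card_le_one.2 fun x hx y hy => ?_
  rw [mem_inter] at hx hy
  rcases hνμ.lt_or_gt with hlt | hlt
  · rw [eq_of_mem_block_of_mem_block hlt hx.1 hx.2, eq_of_mem_block_of_mem_block hlt hy.1 hy.2]
  · rw [eq_of_mem_block_of_mem_block hlt hx.2 hx.1, eq_of_mem_block_of_mem_block hlt hy.2 hy.1]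

lemma Finset.disjoint_powersetCard_of_card_inter_le_one {α : Type*} [DecidableEq α]
    {s t : Finset α} {h : ℕ} (hst : (s ∩ t).card ≤ 1) (hh : 2 ≤ h) :
    Disjoint (s.powersetCard h) (t.powersetCard h) := by
  refine disjoint_left.2 fun S hSs hSt => ?_
  obtain ⟨hSs, hS⟩ := mem_powersetCard.1 hSs
  have := card_le_card (subset_inter hSs (mem_powersetCard.1 hSt).1)
  omega

theorem IsChgSet.sum_choose_card_inter_block_le {h g : ℕ} {A : Finset ℤ}
    (hA : IsChgSet h g ↑A) (hh : 2 ≤ h) (N : ℕ) (s : Finset ℕ) :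
    ∑ ν ∈ s, (A ∩ block N ν).card.choose h ≤ (g - 1) * N.choose (h - 1) := by
  have hdisj : (s : Set ℕ).PairwiseDisjoint fun ν => (A ∩ block N ν).powersetCard h :=
    fun ν _ μ _ hνμ => disjoint_powersetCard_of_card_inter_le_one
      ((card_le_card (inter_subset_inter inter_subset_right inter_subset_right)).trans
        (card_block_inter_block_le_one hνμ)) hh
  calc ∑ ν ∈ s, (A ∩ block N ν).card.choose h
      = (s.biUnion fun ν => (A ∩ block N ν).powersetCard h).card := by
        simp only [card_biUnion hdisj, card_powersetCard]
    _ ≤ (g - 1) * N.choose (h - 1) := by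
      refine hA.card_le_of_subset_Icc (by omega) fun S hS => ?_
      obtain ⟨ν, -, hSν⟩ := mem_biUnion.1 hS
      obtain ⟨hsub, hcard⟩ := mem_powersetCard.1 hSν
      exact ⟨hcard, fun x hx => mem_coe.2 (mem_inter.1 (hsub hx)).1, _,
        (hsub.trans inter_subset_right).trans (block_eq_Icc N ν).le⟩

lemma Nat.pow_le_mul_choose_add_one (m h : ℕ) : m ^ h ≤ (2 * h) ^ h * (m.choose h + 1) := by
  rcases le_or_gt m (2 * h) with hm | hm
  · calc m ^ h ≤ (2 * h) ^ h := Nat.pow_le_pow_left hm h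
      _ ≤ (2 * h) ^ h * (m.choose h + 1) := Nat.le_mul_of_pos_right _ (Nat.succ_pos _)
  · calc m ^ h ≤ (2 * (m + 1 - h)) ^ h := Nat.pow_le_pow_left (by omega) h
      _ = 2 ^ h * (m + 1 - h) ^ h := Nat.mul_pow _ _ _
      _ ≤ 2 ^ h * m.descFactorial h := Nat.mul_le_mul_left _ (Nat.pow_sub_le_descFactorial m h)
      _ = 2 ^ h * (h.factorial * m.choose h) := by rw [Nat.descFactorial_eq_factorial_mul_choose]
      _ ≤ 2 ^ h * (h ^ h * m.choose h) :=
        Nat.mul_le_mul_left _ (Nat.mul_le_mul_right _ (Nat.factorial_le_pow h))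
      _ = (2 * h) ^ h * m.choose h := by rw [Nat.mul_pow]; ring
      _ ≤ (2 * h) ^ h * (m.choose h + 1) := Nat.mul_le_mul_left _ (Nat.le_succ _)

theorem IsChgSet.sum_pow_card_inter_block_le {h g : ℕ} {A : Finset ℤ}
    (hA : IsChgSet h g ↑A) (hh : 2 ≤ h) (N : ℕ) :
    ∑ ν ∈ Icc 1 N, (A ∩ block N ν).card ^ h ≤ (2 * h) ^ h * (g + 1) * N ^ (h - 1) := by
  have hchoose := hA.sum_choose_card_inter_block_le hh N (Icc 1 N)
  have hNchoose := N.choose_le_pow (h - 1)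
  have hNpow : N ≤ N ^ (h - 1) := Nat.le_self_pow (by omega) N
  calc ∑ ν ∈ Icc 1 N, (A ∩ block N ν).card ^ h
      ≤ ∑ ν ∈ Icc 1 N, (2 * h) ^ h * ((A ∩ block N ν).card.choose h + 1) :=
        sum_le_sum fun ν _ => Nat.pow_le_mul_choose_add_one _ h
    _ = (2 * h) ^ h * (∑ ν ∈ Icc 1 N, (A ∩ block N ν).card.choose h + N) := by
        rw [← mul_sum, sum_add_distrib, sum_const, Nat.card_Icc, smul_eq_mul, mul_one,
          Nat.add_sub_cancel]
    _ ≤ (2 * h) ^ h * ((g - 1) * N ^ (h - 1) + N ^ (h - 1)) := Nat.mul_le_mul_left _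
        (Nat.add_le_add (hchoose.trans (Nat.mul_le_mul_left _ hNchoose)) hNpow)
    _ ≤ (2 * h) ^ h * (g + 1) * N ^ (h - 1) := by
        rw [mul_assoc]
        gcongr
        nlinarith [Nat.sub_le g 1]

theorem sum_mul_rpow_neg_le_harmonic {p : ℝ} (hp : 1 < p) {f : ℕ → ℝ} (hf : ∀ ν, 0 ≤ f ν)
    (N : ℕ) :
    ∑ ν ∈ Icc 1 N, f ν * (ν : ℝ) ^ (-(1 - 1 / p)) ≤
      (∑ ν ∈ Icc 1 N, f ν ^ p) ^ (1 / p) * (harmonic N : ℝ) ^ (1 - 1 / p) := by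
  have hpq := HolderConjugate.conjExponent hp
  have hq : 1 - 1 / p = 1 / conjExponent p := by simpa only [one_div] using hpq.one_sub_inv
  have hweight : ∀ ν ∈ Icc 1 N, ((ν : ℝ) ^ (-(1 - 1 / p))) ^ conjExponent p = (ν : ℝ)⁻¹ := by
    intro ν _
    rw [← rpow_mul (Nat.cast_nonneg ν), hq, neg_mul, one_div_mul_cancel hpq.symm.ne_zero,
      rpow_neg_one]
  have hharmonic : ∑ ν ∈ Icc 1 N, (ν : ℝ)⁻¹ = harmonic N := by
    rw [harmonic_eq_sum_Icc]
    push_cast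
    rfl
  calc ∑ ν ∈ Icc 1 N, f ν * (ν : ℝ) ^ (-(1 - 1 / p))
      ≤ (∑ ν ∈ Icc 1 N, f ν ^ p) ^ (1 / p) *
          (∑ ν ∈ Icc 1 N, ((ν : ℝ) ^ (-(1 - 1 / p))) ^ conjExponent p) ^ (1 / conjExponent p) :=
        inner_le_Lp_mul_Lq_of_nonneg _ hpq (fun ν _ => hf ν) fun ν _ => by positivity
    _ = _ := by rw [sum_congr rfl hweight, hharmonic, hq]

lemma harmonic_le_three_mul_log {N : ℕ} (hN : 2 ≤ N) : (harmonic N : ℝ) ≤ 3 * log N := by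
  have hlog : log 2 ≤ log N := log_le_log (by norm_num) (by exact_mod_cast hN)
  linarith [harmonic_le_one_add_log N, log_two_gt_d9]

theorem stmt14_general (g h : ℕ) (hh : 2 ≤ h) :
    ∃ C : ℝ, 0 < C ∧ ∀ N : ℕ, 2 ≤ N → ∀ A : Finset ℤ,
      ↑A ⊆ Set.Icc (0 : ℤ) ((N : ℤ) ^ 2) → IsChgSet h g ↑A →
      ∑ ν ∈ Finset.Icc 1 N,
          ((A ∩ Finset.Icc (((ν : ℤ) - 1) * N) ((ν : ℤ) * N)).card : ℝ) *
            (ν : ℝ) ^ (-(1 - (1 : ℝ) / h)) ≤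
        C * ((N : ℝ) * Real.log N) ^ (1 - (1 : ℝ) / h) := by
  have hh1 : (1 : ℝ) < h := by exact_mod_cast hh
  refine ⟨((2 * h : ℝ) ^ h * (g + 1)) ^ (1 / (h : ℝ)) * 3 ^ (1 - 1 / (h : ℝ)), by positivity,
    fun N hN A _ hA => ?_⟩
  have hlog : 0 ≤ log N := log_nonneg (by exact_mod_cast (by omega : 1 ≤ N))
  have hpow : ∑ ν ∈ Icc 1 N, ((A ∩ block N ν).card : ℝ) ^ (h : ℝ) ≤
      (2 * h : ℝ) ^ h * (g + 1) * (N : ℝ) ^ (h - 1) := by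
    have := (Nat.cast_le (α := ℝ)).2 (hA.sum_pow_card_inter_block_le hh N)
    push_cast at this
    simpa only [rpow_natCast] using this
  have hroot : ((N : ℝ) ^ (h - 1)) ^ (1 / (h : ℝ)) = (N : ℝ) ^ (1 - 1 / (h : ℝ)) := by
    rw [← rpow_natCast, ← rpow_mul (Nat.cast_nonneg N), Nat.cast_sub (by omega)]
    field_simp
    norm_num
  calc _ ≤ (∑ ν ∈ Icc 1 N, ((A ∩ block N ν).card : ℝ) ^ (h : ℝ)) ^ (1 / (h : ℝ)) *
          (harmonic N : ℝ) ^ (1 - 1 / (h : ℝ)) :=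
        sum_mul_rpow_neg_le_harmonic hh1 (fun ν => Nat.cast_nonneg _) N
    _ ≤ ((2 * h : ℝ) ^ h * (g + 1) * (N : ℝ) ^ (h - 1)) ^ (1 / (h : ℝ)) *
          (3 * log N) ^ (1 - 1 / (h : ℝ)) := by
        have hexp : 0 ≤ 1 - 1 / (h : ℝ) := sub_nonneg.2 ((div_le_one (by positivity)).2 hh1.le)
        have hH : 0 ≤ (harmonic N : ℝ) := by exact_mod_cast (harmonic_pos (by omega : N ≠ 0)).le
        gcongr
        exact harmonic_le_three_mul_log hN
    _ = _ := by
        rw [mul_rpow (by positivity) (by positivity), hroot, mul_rpow (by norm_num) hlog,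
          mul_rpow (Nat.cast_nonneg N) hlog]
        ring

theorem stmt14 (g h : ℕ) (hgh : h ≤ g) (hh : 2 ≤ h) :
    ∃ C : ℝ, 0 < C ∧ ∀ N : ℕ, 2 ≤ N → ∀ A : Finset ℤ,
      ↑A ⊆ Set.Icc (0 : ℤ) ((N : ℤ) ^ 2) → IsChgSet h g ↑A →
      ∑ ν ∈ Finset.Icc 1 N,
          ((A ∩ Finset.Icc (((ν : ℤ) - 1) * N) ((ν : ℤ) * N)).card : ℝ) *
            (ν : ℝ) ^ (-(1 - (1 : ℝ) / h)) ≤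
        C * ((N : ℝ) * Real.log N) ^ (1 - (1 : ℝ) / h) :=
  stmt14_general g h hh
end
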